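/- arXiv:2002.07836 — 7 statements merged into one kernel-verified Lean document; each statement's English description precedes it below -/
import Mathlib

section
/- For every w, u ∈ ℝ^d, the products of inner-path Hessian factors along the two inner gradient-descent paths started at w and at u satisfy ‖(I − α∇²l(w̃₀(w)))⋯(I − α∇²l(w̃_{N−1}(w))) − (I − α∇²l(w̃₀(u)))⋯(I − α∇²l(w̃_{N−1}(u)))‖ ≤ ( (1+αL)^{N−1} α ρ + (ρ/L)(1+αL)^N ((1+αL)^{N−1} − 1) ) ‖w − u‖, where the norm is the operator norm. -/
open MeasureTheory

noncomputable def innerPath {d : ℕ} (α : ℝ) (l : EuclideanSpace ℝ (Fin d) → ℝ) :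
    ℕ → EuclideanSpace ℝ (Fin d) → EuclideanSpace ℝ (Fin d)
  | 0, w => w
  | j + 1, w => innerPath α l j w - α • gradient l (innerPath α l j w)

noncomputable def hessProd {d : ℕ} (α : ℝ) (N : ℕ)
    (lS : EuclideanSpace ℝ (Fin d) → ℝ) (w : EuclideanSpace ℝ (Fin d)) :
    EuclideanSpace ℝ (Fin d) →L[ℝ] EuclideanSpace ℝ (Fin d) :=
  ((List.range N).map fun j =>
    ContinuousLinearMap.id ℝ (EuclideanSpace ℝ (Fin d)) -
      α • fderiv ℝ (gradient lS) (innerPath α lS j w)).prod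

noncomputable def metaGrad {d : ℕ} (α : ℝ) (N : ℕ)
    (lS lT : EuclideanSpace ℝ (Fin d) → ℝ) (w : EuclideanSpace ℝ (Fin d)) :
    EuclideanSpace ℝ (Fin d) :=
  hessProd α N lS w (gradient lT (innerPath α lS N w))

def auxE (α ρ β : ℝ) : ℕ → ℝ
  | 0 => 0
  | n + 1 => β * auxE α ρ β n + α * ρ * β ^ (2 * n)

lemma auxE_closed (α L ρ : ℝ) : ∀ n : ℕ,
    L * (1 + α * L) * auxE α ρ (1 + α * L) n =
      ρ * ((1 + α * L) ^ (2 * n) - (1 + α * L) ^ n) := by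
  intro n
  induction n with
  | zero => simp [auxE]
  | succ n ih =>
    have h2 : 2 * (n + 1) = 2 * n + 1 + 1 := by ring
    rw [auxE, h2, pow_succ, pow_succ, pow_succ]
    linear_combination (1 + α * L) * ih

lemma hessProd_succ {d : ℕ} (α : ℝ) (n : ℕ)
    (l : EuclideanSpace ℝ (Fin d) → ℝ) (w : EuclideanSpace ℝ (Fin d)) :
    hessProd α (n + 1) l w = hessProd α n l w *
      (ContinuousLinearMap.id ℝ (EuclideanSpace ℝ (Fin d)) -
        α • fderiv ℝ (gradient l) (innerPath α l n w)) := by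
  simp [hessProd, List.range_succ]

lemma mul_sub_split {R : Type*} [Ring R] (a b c e : R) :
    a * c - b * e = (a - b) * c + b * (c - e) := by
  rw [sub_mul, mul_sub]; abel

theorem stmt4 {d : ℕ} (hd : 1 ≤ d) (α L ρ : ℝ) (hα : 0 < α) (hL : 0 < L) (hρ : 0 < ρ)
    (N : ℕ) (hN : 1 ≤ N)
    (l : EuclideanSpace ℝ (Fin d) → ℝ) (hl : ContDiff ℝ 2 l)
    (hgrad : ∀ w u : EuclideanSpace ℝ (Fin d), ‖gradient l w - gradient l u‖ ≤ L * ‖w - u‖)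
    (hhess : ∀ w u : EuclideanSpace ℝ (Fin d),
      ‖fderiv ℝ (gradient l) w - fderiv ℝ (gradient l) u‖ ≤ ρ * ‖w - u‖) :
    ∀ w u : EuclideanSpace ℝ (Fin d),
      ‖hessProd α N l w - hessProd α N l u‖ ≤
        ((1 + α * L) ^ (N - 1) * α * ρ +
          (ρ / L) * (1 + α * L) ^ N * ((1 + α * L) ^ (N - 1) - 1)) * ‖w - u‖ := by
  haveI : Nonempty (Fin d) := ⟨⟨0, hd⟩⟩
  haveI : Nontrivial (EuclideanSpace ℝ (Fin d)) :=
    inferInstanceAs (Nontrivial (PiLp 2 fun _ : Fin d => ℝ))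
  set β := 1 + α * L with hβdef
  have hβ1 : 1 ≤ β := by nlinarith
  have hβ0 : 0 < β := by nlinarith
  have hH : ∀ x, ‖fderiv ℝ (gradient l) x‖ ≤ L := by
    intro x
    refine norm_fderiv_le_of_lip' ℝ hL.le ?_
    exact Filter.Eventually.of_forall fun y => hgrad y x
  have hpath : ∀ j (w u : EuclideanSpace ℝ (Fin d)),
      ‖innerPath α l j w - innerPath α l j u‖ ≤ β ^ j * ‖w - u‖ := by
    intro j
    induction j with
    | zero => intro w u; simp [innerPath]
    | succ j ih =>
      intro w u
      have key : innerPath α l (j+1) w - innerPath α l (j+1) u =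
          (innerPath α l j w - innerPath α l j u)
            - α • (gradient l (innerPath α l j w) - gradient l (innerPath α l j u)) := by
        simp only [innerPath, smul_sub]; abel
      rw [key]
      have h1 := norm_sub_le (innerPath α l j w - innerPath α l j u)
        (α • (gradient l (innerPath α l j w) - gradient l (innerPath α l j u)))
      have h2 : ‖α • (gradient l (innerPath α l j w) - gradient l (innerPath α l j u))‖
          ≤ α * (L * ‖innerPath α l j w - innerPath α l j u‖) := by
        rw [norm_smul, Real.norm_eq_abs, abs_of_pos hα]
        exact mul_le_mul_of_nonneg_left (hgrad _ _) hα.le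
      have h3 := ih w u
      have hwu : (0:ℝ) ≤ ‖w - u‖ := norm_nonneg _
      calc _ ≤ _ := h1
        _ ≤ β ^ j * ‖w - u‖ + α * (L * (β ^ j * ‖w - u‖)) := by
            nlinarith [norm_nonneg (innerPath α l j w - innerPath α l j u)]
        _ = β ^ (j+1) * ‖w - u‖ := by rw [pow_succ]; ring
  have hfac : ∀ x, ‖ContinuousLinearMap.id ℝ (EuclideanSpace ℝ (Fin d))
      - α • fderiv ℝ (gradient l) x‖ ≤ β := by
    intro x
    refine (norm_sub_le _ _).trans ?_
    have h1 : ‖ContinuousLinearMap.id ℝ (EuclideanSpace ℝ (Fin d))‖ ≤ 1 :=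
      ContinuousLinearMap.norm_id_le
    have h2 : ‖α • fderiv ℝ (gradient l) x‖ ≤ α * L := by
      rw [norm_smul, Real.norm_eq_abs, abs_of_pos hα]
      exact mul_le_mul_of_nonneg_left (hH x) hα.le
    linarith
  have hP : ∀ n (w : EuclideanSpace ℝ (Fin d)), ‖hessProd α n l w‖ ≤ β ^ n := by
    intro n w
    induction n with
    | zero =>
      simp only [hessProd, List.range_zero, List.map_nil, List.prod_nil, pow_zero]
      exact ContinuousLinearMap.norm_id_le
    | succ n ih =>
      rw [hessProd_succ, pow_succ]
      exact (norm_mul_le _ _).trans (mul_le_mul ih (hfac _) (norm_nonneg _) (by positivity))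
  have key : ∀ n (w u : EuclideanSpace ℝ (Fin d)),
      ‖hessProd α n l w - hessProd α n l u‖ ≤ auxE α ρ β n * ‖w - u‖ := by
    intro n
    induction n with
    | zero => intro w u; simp [hessProd, auxE]
    | succ n ih =>
      intro w u
      rw [hessProd_succ, hessProd_succ, mul_sub_split]
      have hAB : ‖(ContinuousLinearMap.id ℝ (EuclideanSpace ℝ (Fin d)) -
            α • fderiv ℝ (gradient l) (innerPath α l n w)) -
          (ContinuousLinearMap.id ℝ (EuclideanSpace ℝ (Fin d)) -
            α • fderiv ℝ (gradient l) (innerPath α l n u))‖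
          ≤ α * ρ * (β ^ n * ‖w - u‖) := by
        have e : ∀ p q : EuclideanSpace ℝ (Fin d) →L[ℝ] EuclideanSpace ℝ (Fin d),
            (ContinuousLinearMap.id ℝ (EuclideanSpace ℝ (Fin d)) - α • p) -
              (ContinuousLinearMap.id ℝ (EuclideanSpace ℝ (Fin d)) - α • q)
              = α • (q - p) := by
          intro p q; rw [smul_sub]; abel
        rw [e]
        refine (norm_smul_le α (fderiv ℝ (gradient l) (innerPath α l n u) -
          fderiv ℝ (gradient l) (innerPath α l n w))).trans ?_
        rw [Real.norm_eq_abs, abs_of_pos hα]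
        calc α * ‖_ - _‖ ≤ α * (ρ * ‖innerPath α l n u - innerPath α l n w‖) :=
              mul_le_mul_of_nonneg_left (hhess _ _) hα.le
          _ ≤ α * (ρ * (β ^ n * ‖u - w‖)) :=
              mul_le_mul_of_nonneg_left
                (mul_le_mul_of_nonneg_left (hpath n u w) hρ.le) hα.le
          _ = α * ρ * (β ^ n * ‖w - u‖) := by rw [norm_sub_rev]; ring
      have hwu : (0:ℝ) ≤ ‖w - u‖ := norm_nonneg _
      refine (norm_add_le _ _).trans ?_
      have t1 : ‖(hessProd α n l w - hessProd α n l u) *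
          (ContinuousLinearMap.id ℝ (EuclideanSpace ℝ (Fin d)) -
            α • fderiv ℝ (gradient l) (innerPath α l n w))‖ ≤ (auxE α ρ β n * ‖w - u‖) * β :=
        (norm_mul_le _ _).trans
          (mul_le_mul (ih w u) (hfac _) (norm_nonneg _) (le_trans (norm_nonneg _) (ih w u)))
      have t2 : ‖hessProd α n l u *
          ((ContinuousLinearMap.id ℝ (EuclideanSpace ℝ (Fin d)) -
            α • fderiv ℝ (gradient l) (innerPath α l n w)) -
          (ContinuousLinearMap.id ℝ (EuclideanSpace ℝ (Fin d)) -
            α • fderiv ℝ (gradient l) (innerPath α l n u)))‖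
          ≤ β ^ n * (α * ρ * (β ^ n * ‖w - u‖)) :=
        (norm_mul_le _ _).trans
          (mul_le_mul (hP n u) hAB (norm_nonneg _) (by positivity))
      have hfin : (auxE α ρ β n * ‖w - u‖) * β + β ^ n * (α * ρ * (β ^ n * ‖w - u‖))
          = auxE α ρ β (n+1) * ‖w - u‖ := by
        rw [auxE, two_mul, pow_add]; ring
      linarith
  intro w u
  obtain ⟨m, rfl⟩ : ∃ m, N = m + 1 := ⟨N - 1, (Nat.succ_pred_eq_of_pos hN).symm⟩
  have hcoef : auxE α ρ β (m + 1) =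
      β ^ ((m+1) - 1) * α * ρ + (ρ / L) * β ^ (m+1) * (β ^ ((m+1) - 1) - 1) := by
    have hc := auxE_closed α L ρ (m + 1)
    rw [← hβdef] at hc
    have hLβ : L * β ≠ 0 := by positivity
    apply mul_left_cancel₀ hLβ
    rw [hc]
    simp only [Nat.add_sub_cancel]
    have e1 : β ^ (2 * (m + 1)) = (β ^ (m + 1)) * (β ^ (m + 1)) := by
      rw [two_mul, pow_add]
    have e2 : β ^ (m + 1) = β * β ^ m := by rw [pow_succ]; ring
    rw [e1, e2, hβdef]
    field_simp
    ring
  rw [← hcoef]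
  exact key (m+1) w u
end

section
/- Define the constant C_𝓛 = ( (1+αL)^{N−1} α ρ + (ρ/L)(1+αL)^N ((1+αL)^{N−1} − 1) ) (1+αL)^N. Then for every w, u ∈ ℝ^d the meta gradient satisfies ‖G(w) − G(u)‖ ≤ ( C_𝓛 ‖∇l(w)‖ + (1+αL)^{2N} L ) ‖w − u‖. -/
open MeasureTheory

/-! The inner path is an iterate of the `(1 + αL)`-Lipschitz map `v ↦ v - α ∇l(v)`, so `w̃ⱼ` is
`(1 + αL)^j`-Lipschitz and `‖∇l(w̃ⱼ(w))‖ ≤ (1 + αL)^j ‖∇l(w)‖`. Each factor `I - α ∇²l(w̃ⱼ)`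
has norm at most `1 + αL` and, by the Hessian bound, moves by at most `αρ (1 + αL)^j ‖w - u‖`.
Telescoping the product `P(w)` of the `N` factors bounds `‖P(w) - P(u)‖` by `(1 + αL)^(N-1)`
times a geometric sum, i.e. by `(ρ/L) (1 + αL)^(N-1) ((1 + αL)^N - 1) ‖w - u‖`. Finally
`G(w) - G(u) = (P(w) - P(u)) ∇l(w̃_N(w)) + P(u) (∇l(w̃_N(w)) - ∇l(w̃_N(u)))`. -/

open scoped NNReal

section GradientStep

variable {𝕜 E : Type*} [NontriviallyNormedField 𝕜] [NormedAddCommGroup E] [NormedSpace 𝕜 E]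
  {g : E → E} {K : ℝ≥0}

theorem LipschitzWith.id_sub_smul (hg : LipschitzWith K g) (α : 𝕜) :
    LipschitzWith (1 + ‖α‖₊ * K) fun v => v - α • g v :=
  LipschitzWith.id.sub ((lipschitzWith_smul α).comp hg)

theorem LipschitzWith.norm_apply_sub_smul_le (hg : LipschitzWith K g) (α : 𝕜) (v : E) :
    ‖g (v - α • g v)‖ ≤ (1 + ‖α‖ * K) * ‖g v‖ :=
  calc ‖g (v - α • g v)‖ ≤ ‖g v‖ + ‖g (v - α • g v) - g v‖ := norm_le_insert' _ _
    _ ≤ ‖g v‖ + K * ‖α • g v‖ := by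
      gcongr
      simpa using hg.norm_sub_le (v - α • g v) v
    _ = (1 + ‖α‖ * K) * ‖g v‖ := by rw [norm_smul]; ring

theorem LipschitzWith.norm_apply_iterate_sub_smul_le (hg : LipschitzWith K g) (α : 𝕜) (n : ℕ)
    (v : E) : ‖g ((fun v => v - α • g v)^[n] v)‖ ≤ (1 + ‖α‖ * K) ^ n * ‖g v‖ := by
  induction n with
  | zero => simp
  | succ n ih =>
    rw [Function.iterate_succ_apply', pow_succ', mul_assoc]
    exact (hg.norm_apply_sub_smul_le α _).trans (by gcongr)

theorem LipschitzWith.norm_id_sub_smul_fderiv_le (hg : LipschitzWith K g) (α : 𝕜) (x : E) :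
    ‖ContinuousLinearMap.id 𝕜 E - α • fderiv 𝕜 g x‖ ≤ 1 + ‖α‖ * K :=
  calc _ ≤ ‖ContinuousLinearMap.id 𝕜 E‖ + ‖α • fderiv 𝕜 g x‖ := _root_.norm_sub_le _ _
    _ ≤ 1 + ‖α‖ * K := by
      rw [norm_smul]
      gcongr
      · exact ContinuousLinearMap.norm_id_le
      · exact norm_fderiv_le_of_lipschitz 𝕜 hg

theorem LipschitzWith.norm_id_sub_smul_sub_le {H : E → E →L[𝕜] E} {P : ℝ≥0}
    (hH : LipschitzWith P H) (α : 𝕜) (x y : E) :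
    ‖(ContinuousLinearMap.id 𝕜 E - α • H x) - (ContinuousLinearMap.id 𝕜 E - α • H y)‖ ≤
      ‖α‖ * P * ‖x - y‖ := by
  rw [sub_sub_sub_cancel_left, ← smul_sub, norm_smul, norm_sub_rev, mul_assoc]
  gcongr
  exact hH.norm_sub_le x y

end GradientStep

theorem ContinuousLinearMap.norm_apply_sub_apply_le {𝕜 E F : Type*} [NontriviallyNormedField 𝕜]
    [SeminormedAddCommGroup E] [SeminormedAddCommGroup F] [NormedSpace 𝕜 E] [NormedSpace 𝕜 F]
    (f g : E →L[𝕜] F) (x y : E) :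
    ‖f x - g y‖ ≤ ‖f - g‖ * ‖x‖ + ‖g‖ * ‖x - y‖ :=
  calc ‖f x - g y‖ = ‖(f - g) x + g (x - y)‖ := by
        rw [sub_apply, map_sub, sub_add_sub_cancel]
    _ ≤ ‖f - g‖ * ‖x‖ + ‖g‖ * ‖x - y‖ :=
      norm_add_le_of_le ((f - g).le_opNorm x) (g.le_opNorm _)

section ListProd

variable {R : Type*} [SeminormedRing R] {A B : ℕ → R} {q : ℝ}

theorem norm_prod_map_range_succ_le (hA : ∀ j, ‖A j‖ ≤ q) (n : ℕ) :
    ‖((List.range (n + 1)).map A).prod‖ ≤ q ^ (n + 1) := by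
  have hq : 0 ≤ q := (norm_nonneg _).trans (hA 0)
  induction n with
  | zero => simpa using hA 0
  | succ n ih =>
    rw [List.prod_range_succ, pow_succ]
    exact (norm_mul_le _ _).trans (mul_le_mul ih (hA _) (norm_nonneg _) (by positivity))

theorem norm_prod_map_range_succ_sub_le (hA : ∀ j, ‖A j‖ ≤ q) (hB : ∀ j, ‖B j‖ ≤ q) (n : ℕ) :
    ‖((List.range (n + 1)).map A).prod - ((List.range (n + 1)).map B).prod‖ ≤
      q ^ n * ∑ j ∈ Finset.range (n + 1), ‖A j - B j‖ := by
  have hq : 0 ≤ q := (norm_nonneg _).trans (hA 0)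
  induction n with
  | zero => simp
  | succ n ih =>
    set PA := ((List.range (n + 1)).map A).prod
    set PB := ((List.range (n + 1)).map B).prod
    rw [List.prod_range_succ A (n + 1), List.prod_range_succ B (n + 1), Finset.sum_range_succ]
    calc ‖PA * A (n + 1) - PB * B (n + 1)‖
        = ‖(PA - PB) * A (n + 1) + PB * (A (n + 1) - B (n + 1))‖ := by noncomm_ring
      _ ≤ ‖PA - PB‖ * ‖A (n + 1)‖ + ‖PB‖ * ‖A (n + 1) - B (n + 1)‖ :=
        norm_add_le_of_le (norm_mul_le _ _) (norm_mul_le _ _)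
      _ ≤ q ^ n * (∑ j ∈ Finset.range (n + 1), ‖A j - B j‖) * q +
          q ^ (n + 1) * ‖A (n + 1) - B (n + 1)‖ := by
        gcongr
        exacts [hA _, norm_prod_map_range_succ_le hB n]
      _ = _ := by ring

end ListProd

section MetaGradient

variable {d : ℕ} {l : EuclideanSpace ℝ (Fin d) → ℝ} {K P : ℝ≥0}

theorem innerPath_eq_iterate (α : ℝ) (l : EuclideanSpace ℝ (Fin d) → ℝ) (j : ℕ) :
    innerPath α l j = (fun v => v - α • gradient l v)^[j] := by
  funext w
  induction j with
  | zero => rfl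
  | succ j ih => rw [Function.iterate_succ_apply', ← ih]; rfl

theorem norm_innerPath_sub_le (hK : LipschitzWith K (gradient l)) (α : ℝ) (j : ℕ)
    (w u : EuclideanSpace ℝ (Fin d)) :
    ‖innerPath α l j w - innerPath α l j u‖ ≤ (1 + ‖α‖ * K) ^ j * ‖w - u‖ := by
  rw [innerPath_eq_iterate]
  exact_mod_cast ((hK.id_sub_smul α).iterate j).norm_sub_le w u

theorem norm_gradient_innerPath_le (hK : LipschitzWith K (gradient l)) (α : ℝ) (j : ℕ)
    (w : EuclideanSpace ℝ (Fin d)) :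
    ‖gradient l (innerPath α l j w)‖ ≤ (1 + ‖α‖ * K) ^ j * ‖gradient l w‖ := by
  rw [innerPath_eq_iterate]
  exact hK.norm_apply_iterate_sub_smul_le α j w

theorem norm_hessProd_succ_le (hK : LipschitzWith K (gradient l)) (α : ℝ) (n : ℕ)
    (w : EuclideanSpace ℝ (Fin d)) : ‖hessProd α (n + 1) l w‖ ≤ (1 + ‖α‖ * K) ^ (n + 1) :=
  norm_prod_map_range_succ_le (fun _ => hK.norm_id_sub_smul_fderiv_le α _) n

theorem norm_hessProd_succ_sub_le (hK : LipschitzWith K (gradient l)) (hK0 : K ≠ 0)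
    (hH : LipschitzWith P (fderiv ℝ (gradient l))) (α : ℝ) (n : ℕ)
    (w u : EuclideanSpace ℝ (Fin d)) :
    ‖hessProd α (n + 1) l w - hessProd α (n + 1) l u‖ ≤
      P / K * (1 + ‖α‖ * K) ^ n * ((1 + ‖α‖ * K) ^ (n + 1) - 1) * ‖w - u‖ := by
  set q : ℝ := 1 + ‖α‖ * K
  have hgeom : ‖α‖ * ∑ j ∈ Finset.range (n + 1), q ^ j = (q ^ (n + 1) - 1) / K := by
    rw [eq_div_iff (NNReal.coe_ne_zero.2 hK0), ← geom_sum_mul]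
    ring
  have hfactor (x : EuclideanSpace ℝ (Fin d)) := hK.norm_id_sub_smul_fderiv_le α x
  calc _ ≤ q ^ n * ∑ j ∈ Finset.range (n + 1), ‖α‖ * P * (q ^ j * ‖w - u‖) := by
        refine (norm_prod_map_range_succ_sub_le (fun _ => hfactor _) (fun _ => hfactor _)
          n).trans ?_
        gcongr with j
        refine (hH.norm_id_sub_smul_sub_le α _ _).trans ?_
        gcongr
        exact norm_innerPath_sub_le hK α j w u
    _ = q ^ n * (P * ‖w - u‖) * (‖α‖ * ∑ j ∈ Finset.range (n + 1), q ^ j) := by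
        simp only [← Finset.sum_mul, ← Finset.mul_sum]
        ring
    _ = _ := by rw [hgeom]; ring

end MetaGradient

theorem stmt5_general {d : ℕ} (α L ρ : ℝ) (hα : 0 < α) (hL : 0 < L) (hρ : 0 < ρ)
    (N : ℕ) (hN : 1 ≤ N)
    (l : EuclideanSpace ℝ (Fin d) → ℝ)
    (hgrad : ∀ w u : EuclideanSpace ℝ (Fin d), ‖gradient l w - gradient l u‖ ≤ L * ‖w - u‖)
    (hhess : ∀ w u : EuclideanSpace ℝ (Fin d),
      ‖fderiv ℝ (gradient l) w - fderiv ℝ (gradient l) u‖ ≤ ρ * ‖w - u‖) :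
    ∀ w u : EuclideanSpace ℝ (Fin d),
      ‖metaGrad α N l l w - metaGrad α N l l u‖ ≤
        ((((1 + α * L) ^ (N - 1) * α * ρ +
            (ρ / L) * (1 + α * L) ^ N * ((1 + α * L) ^ (N - 1) - 1)) * (1 + α * L) ^ N) *
            ‖gradient l w‖ +
          (1 + α * L) ^ (2 * N) * L) * ‖w - u‖ := by
  intro w u
  obtain ⟨n, rfl⟩ : ∃ n, N = n + 1 := ⟨N - 1, by omega⟩
  have hK : LipschitzWith ⟨L, hL.le⟩ (gradient l) := lipschitzWith_iff_norm_sub_le.2 hgrad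
  have hH : LipschitzWith ⟨ρ, hρ.le⟩ (fderiv ℝ (gradient l)) :=
    lipschitzWith_iff_norm_sub_le.2 hhess
  have hP := norm_hessProd_succ_sub_le hK (NNReal.coe_ne_zero.1 hL.ne') hH α n w u
  have hPu := norm_hessProd_succ_le hK α n u
  have hg := norm_gradient_innerPath_le hK α (n + 1) w
  have hpath := norm_innerPath_sub_le hK α (n + 1) w u
  simp only [Real.norm_of_nonneg hα.le] at hP hPu hg hpath
  set q := 1 + α * L
  calc _ ≤ _ := ContinuousLinearMap.norm_apply_sub_apply_le _ _ _ _
    _ ≤ ρ / L * q ^ n * (q ^ (n + 1) - 1) * ‖w - u‖ * (q ^ (n + 1) * ‖gradient l w‖) +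
        q ^ (n + 1) * (L * (q ^ (n + 1) * ‖w - u‖)) :=
      add_le_add (mul_le_mul hP hg (norm_nonneg _) ((norm_nonneg _).trans hP))
        (mul_le_mul hPu ((hgrad _ _).trans (mul_le_mul_of_nonneg_left hpath hL.le))
          (norm_nonneg _) (by positivity))
    -- the stated constant is (ρ / L) q ^ n (q ^ (n + 1) - 1) q ^ (n + 1) rewritten via q - 1 = α L
    _ = _ := by
      rw [Nat.add_sub_cancel]
      field_simp
      ring

theorem stmt5 {d : ℕ} (hd : 1 ≤ d) (α L ρ : ℝ) (hα : 0 < α) (hL : 0 < L) (hρ : 0 < ρ)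
    (N : ℕ) (hN : 1 ≤ N)
    (l : EuclideanSpace ℝ (Fin d) → ℝ) (hl : ContDiff ℝ 2 l)
    (hgrad : ∀ w u : EuclideanSpace ℝ (Fin d), ‖gradient l w - gradient l u‖ ≤ L * ‖w - u‖)
    (hhess : ∀ w u : EuclideanSpace ℝ (Fin d),
      ‖fderiv ℝ (gradient l) w - fderiv ℝ (gradient l) u‖ ≤ ρ * ‖w - u‖) :
    ∀ w u : EuclideanSpace ℝ (Fin d),
      ‖metaGrad α N l l w - metaGrad α N l l u‖ ≤
        ((((1 + α * L) ^ (N - 1) * α * ρ +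
            (ρ / L) * (1 + α * L) ^ N * ((1 + α * L) ^ (N - 1) - 1)) * (1 + α * L) ^ N) *
            ‖gradient l w‖ +
          (1 + α * L) ^ (2 * N) * L) * ‖w - u‖ :=
  stmt5_general α L ρ hα hL hρ N hN l hgrad hhess
end

section
/- Let (Ω, ℱ, P) be a probability space and let ξ₀, …, ξ_{N−1} : Ω → ℝ^d be integrable random vectors with 𝔼‖ξⱼ‖ ≤ σ_g/√S for every j. Fix w ∈ ℝ^d and define the stochastic path w₀ = w, w_{j+1} = wⱼ − α(∇l(wⱼ) + ξⱼ) for j = 0,…,N−1, and the deterministic inner gradient-descent path w̃₀ = w, w̃_{j+1} = w̃ⱼ − α∇l(w̃ⱼ). Then for every j = 0,…,N, 𝔼‖wⱼ − w̃ⱼ‖ ≤ ((1 + αL)^j − 1) σ_g / (L√S). -/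
open MeasureTheory

theorem stmt7 {d : ℕ} (hd : 1 ≤ d) (α L σg S : ℝ) (hα : 0 < α) (hL : 0 < L)
    (hσg : 0 < σg) (hS : 0 < S) (N : ℕ) (hN : 1 ≤ N)
    (l : EuclideanSpace ℝ (Fin d) → ℝ) (hdiff : Differentiable ℝ l)
    (hlip : ∀ w u : EuclideanSpace ℝ (Fin d), ‖gradient l w - gradient l u‖ ≤ L * ‖w - u‖)
    {Ω : Type*} [MeasurableSpace Ω] (P : Measure Ω) [IsProbabilityMeasure P]
    (ξ : ℕ → Ω → EuclideanSpace ℝ (Fin d))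
    (hint : ∀ j < N, Integrable (ξ j) P)
    (hbound : ∀ j < N, (∫ ω, ‖ξ j ω‖ ∂P) ≤ σg / Real.sqrt S)
    (w0 : EuclideanSpace ℝ (Fin d)) (W : ℕ → Ω → EuclideanSpace ℝ (Fin d))
    (hW0 : ∀ ω, W 0 ω = w0)
    (hWrec : ∀ j < N, ∀ ω, W (j + 1) ω = W j ω - α • (gradient l (W j ω) + ξ j ω)) :
    ∀ j ≤ N, (∫ ω, ‖W j ω - innerPath α l j w0‖ ∂P) ≤
      ((1 + α * L) ^ j - 1) * σg / (L * Real.sqrt S) := by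

  have hsqS : 0 < Real.sqrt S := Real.sqrt_pos.mpr hS
  have hgcont : Continuous (gradient l) := by
    have hlw : LipschitzWith (Real.toNNReal L) (gradient l) := by
      apply LipschitzWith.of_dist_le_mul
      intro x y
      simp only [dist_eq_norm]
      calc ‖gradient l x - gradient l y‖ ≤ L * ‖x - y‖ := hlip x y
        _ ≤ Real.toNNReal L * ‖x - y‖ := by
            gcongr
            exact Real.le_coe_toNNReal L
    exact hlw.continuous
  suffices h : ∀ j ≤ N, Integrable (fun ω => W j ω - innerPath α l j w0) P ∧
      (∫ ω, ‖W j ω - innerPath α l j w0‖ ∂P) ≤ ((1 + α * L) ^ j - 1) * σg / (L * Real.sqrt S) by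
    intro j hj; exact (h j hj).2
  intro j
  induction j with
  | zero =>
    intro _
    constructor
    · have : (fun ω => W 0 ω - innerPath α l 0 w0) = fun _ => (0 : EuclideanSpace ℝ (Fin d)) := by
        funext ω; simp [hW0, innerPath]
      rw [this]; exact integrable_const 0
    · simp [hW0, innerPath]
  | succ j ih =>
    intro hj1
    have hjN : j < N := hj1
    obtain ⟨hDint, hIH⟩ := ih (le_of_lt hjN)
    set wj := innerPath α l j w0 with hwj
    have hWsm : AEStronglyMeasurable (W j) P := by
      have h1 : AEStronglyMeasurable (fun ω => (W j ω - wj) + wj) P :=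
        hDint.aestronglyMeasurable.add aestronglyMeasurable_const
      simpa using h1
    have hgint : Integrable (fun ω => gradient l (W j ω) - gradient l wj) P := by
      apply Integrable.mono' (hDint.norm.const_mul L)
      · exact (hgcont.comp_aestronglyMeasurable hWsm).sub aestronglyMeasurable_const
      · filter_upwards with ω
        simpa using hlip (W j ω) wj
    have hξ := hint j hjN
    have key : ∀ ω, W (j + 1) ω - innerPath α l (j + 1) w0 =
        (W j ω - wj) - α • (gradient l (W j ω) - gradient l wj) - α • ξ j ω := by
      intro ω
      rw [hWrec j hjN ω]
      show W j ω - α • (gradient l (W j ω) + ξ j ω) - (wj - α • gradient l wj) = _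
      simp only [smul_add, smul_sub]
      abel
    have hD1int : Integrable (fun ω => W (j + 1) ω - innerPath α l (j + 1) w0) P := by
      simp only [key]
      exact (hDint.sub (hgint.smul α)).sub (hξ.smul α)
    refine ⟨hD1int, ?_⟩
    have hpt : ∀ ω, ‖W (j + 1) ω - innerPath α l (j + 1) w0‖ ≤
        (1 + α * L) * ‖W j ω - wj‖ + α * ‖ξ j ω‖ := by
      intro ω
      rw [key ω]
      calc ‖(W j ω - wj) - α • (gradient l (W j ω) - gradient l wj) - α • ξ j ω‖
          ≤ ‖(W j ω - wj) - α • (gradient l (W j ω) - gradient l wj)‖ + ‖α • ξ j ω‖ :=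
            norm_sub_le _ _
        _ ≤ ‖W j ω - wj‖ + ‖α • (gradient l (W j ω) - gradient l wj)‖ + ‖α • ξ j ω‖ := by
            gcongr; exact norm_sub_le _ _
        _ ≤ ‖W j ω - wj‖ + α * (L * ‖W j ω - wj‖) + α * ‖ξ j ω‖ := by
            rw [norm_smul, norm_smul, Real.norm_eq_abs, abs_of_pos hα]
            gcongr
            exact hlip _ _
        _ = (1 + α * L) * ‖W j ω - wj‖ + α * ‖ξ j ω‖ := by ring
    have hmono : (∫ ω, ‖W (j + 1) ω - innerPath α l (j + 1) w0‖ ∂P) ≤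
        ∫ ω, ((1 + α * L) * ‖W j ω - wj‖ + α * ‖ξ j ω‖) ∂P := by
      apply integral_mono hD1int.norm
      · exact ((hDint.norm.const_mul _).add (hξ.norm.const_mul _))
      · exact hpt
    rw [integral_add (hDint.norm.const_mul _) (hξ.norm.const_mul _),
      integral_const_mul, integral_const_mul] at hmono
    have hstep : (1 + α * L) * ∫ ω, ‖W j ω - wj‖ ∂P ≤
        (1 + α * L) * (((1 + α * L) ^ j - 1) * σg / (L * Real.sqrt S)) := by
      apply mul_le_mul_of_nonneg_left hIH
      positivity
    have hξb : α * ∫ ω, ‖ξ j ω‖ ∂P ≤ α * (σg / Real.sqrt S) :=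
      mul_le_mul_of_nonneg_left (hbound j hjN) hα.le
    calc (∫ ω, ‖W (j + 1) ω - innerPath α l (j + 1) w0‖ ∂P)
        ≤ (1 + α * L) * (((1 + α * L) ^ j - 1) * σg / (L * Real.sqrt S)) +
            α * (σg / Real.sqrt S) := by
          refine hmono.trans (add_le_add hstep hξb)
      _ = ((1 + α * L) ^ (j + 1) - 1) * σg / (L * Real.sqrt S) := by
          field_simp
          ring
end

section
/- Let (Ω, ℱ, P) be a probability space with a filtration (ℱⱼ)_{j=0}^{N}, and let ξ₀, …, ξ_{N−1} : Ω → ℝ^d be square-integrable random vectors such that each ξⱼ is ℱ_{j+1}-measurable, 𝔼[ξⱼ | ℱⱼ] = 0 almost surely, and 𝔼[‖ξⱼ‖² | ℱⱼ] ≤ σ_g²/S almost surely. Fix w ∈ ℝ^d and define the stochastic path w₀ = w, w_{j+1} = wⱼ − α(∇l(wⱼ) + ξⱼ) for j = 0,…,N−1 (so that wⱼ is ℱⱼ-measurable), and the deterministic inner gradient-descent path w̃₀ = w, w̃_{j+1} = w̃ⱼ − α∇l(w̃ⱼ). Then for every j = 0,…,N, 𝔼‖wⱼ − w̃ⱼ‖²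 ≤ ((1 + 2αL + 2α²L²)^j − 1) · α σ_g² / ((1 + αL) L S). -/
/-!
Write `eⱼ = wⱼ - w̃ⱼ`. One step of both recursions gives `eⱼ₊₁ = Yⱼ - α ξⱼ` with
`Yⱼ = eⱼ - α (∇l(wⱼ) - ∇l(w̃ⱼ))`, which is `ℱⱼ`-measurable and satisfies
`‖Yⱼ‖ ≤ (1 + αL) ‖eⱼ‖`. Since `ξⱼ` is conditionally centred given `ℱⱼ`, the cross term
`𝔼⟪Yⱼ, ξⱼ⟫` vanishes, so `𝔼‖eⱼ₊₁‖² ≤ (1 + αL)² 𝔼‖eⱼ‖² + α² σ_g² / S`. As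
`(1 + αL)² ≤ ρ := 1 + 2αL + 2α²L²` and `α² σ_g² / S ≤ c (ρ - 1)` for
`c = α σ_g² / ((1 + αL) L S)`, unrolling this recursion from `e₀ = 0` gives `c (ρʲ - 1)`.
-/

open MeasureTheory
open scoped InnerProductSpace

lemma LipschitzWith.comp_memLp_of_isFiniteMeasure {Ω E F : Type*} {mΩ : MeasurableSpace Ω}
    {P : Measure Ω} [IsFiniteMeasure P] [NormedAddCommGroup E] [NormedAddCommGroup F]
    {K : NNReal} {g : E → F} (hg : LipschitzWith K g) {f : Ω → E} {p : ENNReal}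
    (hf : MemLp f p P) : MemLp (fun ω => g (f ω)) p P := by
  have hg0 : LipschitzWith K fun x => g x - g 0 :=
    LipschitzWith.of_dist_le_mul fun x y => by
      rw [dist_sub_right]
      exact hg.dist_le_mul x y
  convert (hg0.comp_memLp (by simp) hf).add (memLp_const (g 0)) using 1
  ext ω
  simp

section Probability

variable {Ω E : Type*} {m mΩ : MeasurableSpace Ω} {P : Measure Ω}
  [NormedAddCommGroup E] [InnerProductSpace ℝ E]

lemma integrable_inner_of_memLp_two {X ξ : Ω → E} (hX : MemLp X 2 P) (hξ : MemLp ξ 2 P) :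
    Integrable (fun ω => ⟪X ω, ξ ω⟫_ℝ) P := by
  refine (hX.norm.integrable_mul hξ.norm).mono' (hX.1.inner hξ.1) (ae_of_all _ fun ω => ?_)
  rw [Pi.mul_apply, Real.norm_eq_abs]
  exact abs_real_inner_le_norm (X ω) (ξ ω)

lemma integral_inner_eq_zero_of_condExp_eq_zero [CompleteSpace E] [IsFiniteMeasure P]
    (hm : m ≤ mΩ) {X ξ : Ω → E} (hXm : StronglyMeasurable[m] X) (hX : MemLp X 2 P)
    (hξ : MemLp ξ 2 P) (hξ0 : P[ξ | m] =ᵐ[P] 0) :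
    ∫ ω, ⟪X ω, ξ ω⟫_ℝ ∂P = 0 := by
  have hpull := condExp_bilin_of_stronglyMeasurable_left (innerSL ℝ) hXm
    (integrable_inner_of_memLp_two hX hξ) (hξ.integrable one_le_two)
  calc ∫ ω, ⟪X ω, ξ ω⟫_ℝ ∂P = ∫ ω, P[fun ω => ⟪X ω, ξ ω⟫_ℝ | m] ω ∂P :=
        (integral_condExp hm).symm
    _ = ∫ _, (0 : ℝ) ∂P := integral_congr_ae <| hpull.trans <| by
        filter_upwards [hξ0] with ω hω
        simp [hω]
    _ = 0 := integral_zero _ _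

lemma integral_norm_sub_smul_sq_of_condExp_eq_zero [CompleteSpace E] [IsFiniteMeasure P]
    (hm : m ≤ mΩ) {Y ξ : Ω → E} (hYm : StronglyMeasurable[m] Y) (hY : MemLp Y 2 P)
    (hξ : MemLp ξ 2 P) (hξ0 : P[ξ | m] =ᵐ[P] 0) (a : ℝ) :
    ∫ ω, ‖Y ω - a • ξ ω‖ ^ 2 ∂P = ∫ ω, ‖Y ω‖ ^ 2 ∂P + a ^ 2 * ∫ ω, ‖ξ ω‖ ^ 2 ∂P := by
  have hexpand : ∀ ω, ‖Y ω - a • ξ ω‖ ^ 2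
      = ‖Y ω‖ ^ 2 - 2 * a * ⟪Y ω, ξ ω⟫_ℝ + a ^ 2 * ‖ξ ω‖ ^ 2 := fun ω => by
    rw [norm_sub_sq_real, real_inner_smul_right, norm_smul, mul_pow, Real.norm_eq_abs, sq_abs]
    ring
  have hY2 := hY.integrable_norm_pow two_ne_zero
  have hξ2 := hξ.integrable_norm_pow two_ne_zero
  have hcross : Integrable (fun ω => 2 * a * ⟪Y ω, ξ ω⟫_ℝ) P :=
    (integrable_inner_of_memLp_two hY hξ).const_mul (2 * a)
  have hfirst : Integrable (fun ω => ‖Y ω‖ ^ 2 - 2 * a * ⟪Y ω, ξ ω⟫_ℝ) P := hY2.sub hcross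
  simp_rw [hexpand]
  rw [integral_add hfirst (hξ2.const_mul _), integral_sub hY2 hcross, integral_const_mul,
    integral_const_mul, integral_inner_eq_zero_of_condExp_eq_zero hm hYm hY hξ hξ0]
  ring

lemma integral_le_of_condExp_le [IsProbabilityMeasure P] (hm : m ≤ mΩ) {f : Ω → ℝ} {c : ℝ}
    (hf : ∀ᵐ ω ∂P, P[f | m] ω ≤ c) : ∫ ω, f ω ∂P ≤ c := by
  rw [← integral_condExp hm]
  simpa using integral_mono_ae integrable_condExp (integrable_const c) hf

end Probability

lemma norm_sub_sub_smul_sub_le {E : Type*} [NormedAddCommGroup E] [NormedSpace ℝ E]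
    {K : NNReal} {g : E → E} (hg : LipschitzWith K g) {α : ℝ} (hα : 0 ≤ α) (u v : E) :
    ‖(u - v) - α • (g u - g v)‖ ≤ (1 + α * K) * ‖u - v‖ :=
  calc ‖(u - v) - α • (g u - g v)‖ ≤ ‖u - v‖ + α * ‖g u - g v‖ := by
        simpa [norm_smul, abs_of_nonneg hα] using norm_sub_le (u - v) (α • (g u - g v))
    _ ≤ ‖u - v‖ + α * (K * ‖u - v‖) := by gcongr; exact hg.norm_sub_le u v
    _ = (1 + α * K) * ‖u - v‖ := by ring

lemma le_pow_sub_one_mul_of_le_mul_add {e : ℕ → ℝ} {ρ b c : ℝ} {n : ℕ} (hρ : 0 ≤ ρ)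
    (he0 : e 0 ≤ 0) (hb : b ≤ (ρ - 1) * c) (hstep : ∀ j < n, e (j + 1) ≤ ρ * e j + b) :
    ∀ j ≤ n, e j ≤ (ρ ^ j - 1) * c := by
  intro j hj
  induction j with
  | zero => simpa using he0
  | succ j ih =>
    calc e (j + 1) ≤ ρ * e j + b := hstep j hj
      _ ≤ ρ * ((ρ ^ j - 1) * c) + (ρ - 1) * c := by gcongr; exact ih (by omega)
      _ = (ρ ^ (j + 1) - 1) * c := by ring

section StochasticGradientStep

variable {Ω E : Type*} {mΩ : MeasurableSpace Ω} {P : Measure Ω}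
  [NormedAddCommGroup E] [InnerProductSpace ℝ E]
  {K : NNReal} {g : E → E} {α : ℝ}

lemma stronglyMeasurable_and_memLp_of_sgd_rec [IsFiniteMeasure P] (hg : LipschitzWith K g)
    (𝔽 : Filtration ℕ mΩ) {N : ℕ} {ξ W : ℕ → Ω → E} {w0 : E} (hmem : ∀ j < N, MemLp (ξ j) 2 P)
    (hmeas : ∀ j < N, StronglyMeasurable[𝔽 (j + 1)] (ξ j)) (hW0 : ∀ ω, W 0 ω = w0)
    (hWrec : ∀ j < N, ∀ ω, W (j + 1) ω = W j ω - α • (g (W j ω) + ξ j ω)) :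
    ∀ j ≤ N, StronglyMeasurable[𝔽 j] (W j) ∧ MemLp (W j) 2 P := by
  intro j hj
  induction j with
  | zero =>
    rw [funext hW0]
    exact ⟨stronglyMeasurable_const, memLp_const w0⟩
  | succ j ih =>
    obtain ⟨hWm, hW2⟩ := ih (by omega)
    rw [funext (hWrec j hj)]
    have hWm' := hWm.mono (𝔽.mono j.le_succ)
    exact ⟨hWm'.sub (((hg.continuous.comp_stronglyMeasurable hWm').add (hmeas j hj)).const_smul α),
      hW2.sub (((hg.comp_memLp_of_isFiniteMeasure hW2).add (hmem j hj)).const_smul α)⟩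

lemma integral_norm_sub_sgd_step_sq_le [CompleteSpace E] [IsProbabilityMeasure P]
    {m : MeasurableSpace Ω} (hm : m ≤ mΩ) (hg : LipschitzWith K g) (hα : 0 ≤ α)
    {V ξ : Ω → E} {v : ℝ} (x : E)
    (hVm : StronglyMeasurable[m] V) (hV : MemLp V 2 P) (hξ : MemLp ξ 2 P)
    (hξ0 : P[ξ | m] =ᵐ[P] 0) (hξv : ∀ᵐ ω ∂P, P[fun ω' => ‖ξ ω'‖ ^ 2 | m] ω ≤ v) :
    ∫ ω, ‖(V ω - α • (g (V ω) + ξ ω)) - (x - α • g x)‖ ^ 2 ∂P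
      ≤ (1 + α * K) ^ 2 * ∫ ω, ‖V ω - x‖ ^ 2 ∂P + α ^ 2 * v := by
  set Y : Ω → E := fun ω => (V ω - x) - α • (g (V ω) - g x)
  have hYm : StronglyMeasurable[m] Y :=
    (hVm.sub stronglyMeasurable_const).sub
      (((hg.continuous.comp_stronglyMeasurable hVm).sub stronglyMeasurable_const).const_smul α)
  have hY : MemLp Y 2 P :=
    (hV.sub (memLp_const x)).sub
      (((hg.comp_memLp_of_isFiniteMeasure hV).sub (memLp_const (g x))).const_smul α)
  have hsplit : ∀ ω, (V ω - α • (g (V ω) + ξ ω)) - (x - α • g x) = Y ω - α • ξ ω := fun ω => by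
    simp only [Y, smul_add, smul_sub]
    abel
  have hYle : ∫ ω, ‖Y ω‖ ^ 2 ∂P ≤ (1 + α * K) ^ 2 * ∫ ω, ‖V ω - x‖ ^ 2 ∂P := by
    rw [← integral_const_mul]
    refine integral_mono (hY.integrable_norm_pow two_ne_zero)
      (((hV.sub (memLp_const x)).integrable_norm_pow two_ne_zero).const_mul _) fun ω => ?_
    rw [← mul_pow]
    exact pow_le_pow_left₀ (norm_nonneg _) (norm_sub_sub_smul_sub_le hg hα (V ω) x) 2
  simp_rw [hsplit]
  rw [integral_norm_sub_smul_sq_of_condExp_eq_zero hm hYm hY hξ hξ0]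
  gcongr
  exact integral_le_of_condExp_le hm hξv

end StochasticGradientStep

theorem stmt8_general {d : ℕ} (α L σg S : ℝ) (hα : 0 < α) (hL : 0 < L)
    (hS : 0 < S) (N : ℕ)
    (l : EuclideanSpace ℝ (Fin d) → ℝ)
    (hlip : ∀ w u : EuclideanSpace ℝ (Fin d), ‖gradient l w - gradient l u‖ ≤ L * ‖w - u‖)
    {Ω : Type*} {mΩ : MeasurableSpace Ω} (P : Measure Ω) [IsProbabilityMeasure P]
    (𝔽 : Filtration ℕ mΩ)
    (ξ : ℕ → Ω → EuclideanSpace ℝ (Fin d))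
    (hmem : ∀ j < N, MemLp (ξ j) 2 P)
    (hmeas : ∀ j < N, StronglyMeasurable[𝔽 (j + 1)] (ξ j))
    (hcond0 : ∀ j < N, P[ξ j | 𝔽 j] =ᵐ[P] 0)
    (hcondvar : ∀ j < N, ∀ᵐ ω ∂P, (P[fun ω' => ‖ξ j ω'‖ ^ 2 | 𝔽 j]) ω ≤ σg ^ 2 / S)
    (w0 : EuclideanSpace ℝ (Fin d)) (W : ℕ → Ω → EuclideanSpace ℝ (Fin d))
    (hW0 : ∀ ω, W 0 ω = w0)
    (hWrec : ∀ j < N, ∀ ω, W (j + 1) ω = W j ω - α • (gradient l (W j ω) + ξ j ω)) :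
    ∀ j ≤ N, (∫ ω, ‖W j ω - innerPath α l j w0‖ ^ 2 ∂P) ≤
      ((1 + 2 * α * L + 2 * α ^ 2 * L ^ 2) ^ j - 1) * α * σg ^ 2 /
        ((1 + α * L) * L * S) := by
  have hLip : LipschitzWith ⟨L, hL.le⟩ (gradient l) :=
    LipschitzWith.of_dist_le_mul fun u w => by
      rw [dist_eq_norm, dist_eq_norm]
      exact hlip u w
  have hW := stronglyMeasurable_and_memLp_of_sgd_rec hLip 𝔽 hmem hmeas hW0 hWrec
  set e : ℕ → ℝ := fun j => ∫ ω, ‖W j ω - innerPath α l j w0‖ ^ 2 ∂P with he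
  have hstep : ∀ j < N, e (j + 1) ≤ (1 + 2 * α * L + 2 * α ^ 2 * L ^ 2) * e j
        + α ^ 2 * (σg ^ 2 / S) := by
    intro j hj
    simp only [he]
    obtain ⟨hWm, hW2⟩ := hW j hj.le
    simp_rw [hWrec j hj]
    refine (integral_norm_sub_sgd_step_sq_le (𝔽.le j) hLip hα.le (innerPath α l j w0) hWm hW2
      (hmem j hj) (hcond0 j hj) (hcondvar j hj)).trans ?_
    gcongr
    change (1 + α * L) ^ 2 ≤ _
    nlinarith [sq_nonneg (α * L)]
  have hnoise : α ^ 2 * (σg ^ 2 / S) ≤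
      (1 + 2 * α * L + 2 * α ^ 2 * L ^ 2 - 1) * (α * σg ^ 2 / ((1 + α * L) * L * S)) := by
    have hc : (1 + 2 * α * L + 2 * α ^ 2 * L ^ 2 - 1) * (α * σg ^ 2 / ((1 + α * L) * L * S))
        = 2 * (α ^ 2 * (σg ^ 2 / S)) := by
      field_simp
      ring
    rw [hc]
    linarith [show 0 ≤ α ^ 2 * (σg ^ 2 / S) by positivity]
  have hstart : e 0 ≤ 0 := by simp [he, hW0, innerPath]
  intro j hj
  rw [mul_assoc, mul_div_assoc]
  exact le_pow_sub_one_mul_of_le_mul_add (by positivity) hstart hnoise hstep j hj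

theorem stmt8 {d : ℕ} (hd : 1 ≤ d) (α L σg S : ℝ) (hα : 0 < α) (hL : 0 < L)
    (hσg : 0 < σg) (hS : 0 < S) (N : ℕ) (hN : 1 ≤ N)
    (l : EuclideanSpace ℝ (Fin d) → ℝ) (hdiff : Differentiable ℝ l)
    (hlip : ∀ w u : EuclideanSpace ℝ (Fin d), ‖gradient l w - gradient l u‖ ≤ L * ‖w - u‖)
    {Ω : Type*} {mΩ : MeasurableSpace Ω} (P : Measure Ω) [IsProbabilityMeasure P]
    (𝔽 : Filtration ℕ mΩ)
    (ξ : ℕ → Ω → EuclideanSpace ℝ (Fin d))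
    (hmem : ∀ j < N, MemLp (ξ j) 2 P)
    (hmeas : ∀ j < N, StronglyMeasurable[𝔽 (j + 1)] (ξ j))
    (hcond0 : ∀ j < N, P[ξ j | 𝔽 j] =ᵐ[P] 0)
    (hcondvar : ∀ j < N, ∀ᵐ ω ∂P, (P[fun ω' => ‖ξ j ω'‖ ^ 2 | 𝔽 j]) ω ≤ σg ^ 2 / S)
    (w0 : EuclideanSpace ℝ (Fin d)) (W : ℕ → Ω → EuclideanSpace ℝ (Fin d))
    (hW0 : ∀ ω, W 0 ω = w0)
    (hWrec : ∀ j < N, ∀ ω, W (j + 1) ω = W j ω - α • (gradient l (W j ω) + ξ j ω)) :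
    ∀ j ≤ N, (∫ ω, ‖W j ω - innerPath α l j w0‖ ^ 2 ∂P) ≤
      ((1 + 2 * α * L + 2 * α ^ 2 * L ^ 2) ^ j - 1) * α * σg ^ 2 /
        ((1 + α * L) * L * S) :=
  stmt8_general α L σg S hα hL hS N l hlip P 𝔽 ξ hmem hmeas hcond0 hcondvar w0 W hW0 hWrec
end

section
/- Assume α < (2^{1/(2N)} − 1)/L, so that C_l := (1+αL)^{2N} − 1 < 1, and assume the bounded-variance condition ∫_I ‖∇lᵢ(w) − ∇l(w)‖² dμ(i) ≤ σ² for every w ∈ ℝ^d, where ∇l(w) = ∫_I ∇lᵢ(w) dμ(i). Then for every w ∈ ℝ^d, ‖∇l(w)‖ ≤ (1/(1 − C_l)) ‖∇𝓛(w)‖ + (C_l/(1 − C_l)) σ, where ∇𝓛(w) = ∫_I Gᵢ(w) dμ(i). -/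
/-!
Each meta gradient `Gᵢ(w)` is a relative perturbation of `∇lᵢ(w)`: along the inner path the
gradient moves by at most a factor `(1 + αL)` per step, and every Hessian factor `I − α∇²lᵢ`
lies within `αL` of the identity, so `‖Gᵢ(w) − ∇lᵢ(w)‖ ≤ C_l ‖∇lᵢ(w)‖`. Averaging over tasks,
`‖∇l(w) − ∇𝓛(w)‖ ≤ C_l 𝔼‖∇lᵢ(w)‖ ≤ C_l (σ + ‖∇l(w)‖)` by Jensen and the variance bound, and
`C_l < 1` lets the term `C_l ‖∇l(w)‖` be absorbed on the left.
-/

open MeasureTheory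

open ProbabilityTheory
open scoped NNReal

section NormedRing

variable {R : Type*} [SeminormedRing R]

lemma norm_le_of_norm_sub_one_le (h1 : ‖(1 : R)‖ ≤ 1) {a : R} {δ : ℝ} (h : ‖a - 1‖ ≤ δ) :
    ‖a‖ ≤ 1 + δ := by
  linarith [norm_le_norm_add_norm_sub' a 1]

lemma norm_list_prod_sub_one_le (h1 : ‖(1 : R)‖ ≤ 1) {ε : ℝ} (hε : 0 ≤ ε) :
    ∀ l : List R, (∀ a ∈ l, ‖a - 1‖ ≤ ε) → ‖l.prod - 1‖ ≤ (1 + ε) ^ l.length - 1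
  | [], _ => by simp
  | a :: l, h => by
    have ih := norm_list_prod_sub_one_le h1 hε l fun b hb => h b (List.mem_cons_of_mem a hb)
    have hprod : ‖l.prod‖ ≤ (1 + ε) ^ l.length := by
      simpa using norm_le_of_norm_sub_one_le h1 ih
    have hsplit : (a :: l).prod - 1 = (a - 1) * l.prod + (l.prod - 1) := by
      rw [List.prod_cons]; noncomm_ring
    calc ‖(a :: l).prod - 1‖ ≤ ‖a - 1‖ * ‖l.prod‖ + ‖l.prod - 1‖ := by
          rw [hsplit]; exact (norm_add_le _ _).trans (add_le_add_left (norm_mul_le _ _) _)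
      _ ≤ ε * (1 + ε) ^ l.length + ((1 + ε) ^ l.length - 1) := by
          gcongr
          exact h a List.mem_cons_self
      _ = (1 + ε) ^ (a :: l).length - 1 := by rw [List.length_cons, pow_succ]; ring

end NormedRing

section InnerPath

variable {d : ℕ} {α : ℝ} {K : ℝ≥0} {f : EuclideanSpace ℝ (Fin d) → ℝ}

lemma norm_gradient_innerPath_succ_sub_le (hf : LipschitzWith K (gradient f)) (hα : 0 ≤ α)
    (j : ℕ) (w : EuclideanSpace ℝ (Fin d)) :
    ‖gradient f (innerPath α f (j + 1) w) - gradient f (innerPath α f j w)‖ ≤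
      α * K * ‖gradient f (innerPath α f j w)‖ := by
  calc _ ≤ K * ‖innerPath α f (j + 1) w - innerPath α f j w‖ := hf.norm_sub_le _ _
    _ = α * K * ‖gradient f (innerPath α f j w)‖ := by
        rw [innerPath, sub_sub_cancel_left, norm_neg, norm_smul, Real.norm_of_nonneg hα]; ring

lemma norm_gradient_innerPath_sub_le (hf : LipschitzWith K (gradient f)) (hα : 0 ≤ α)
    (w : EuclideanSpace ℝ (Fin d)) :
    ∀ j : ℕ, ‖gradient f (innerPath α f j w) - gradient f w‖ ≤
      ((1 + α * K) ^ j - 1) * ‖gradient f w‖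
  | 0 => by simp [innerPath]
  | j + 1 => by
    have ih := norm_gradient_innerPath_sub_le hf hα w j
    have hj : ‖gradient f (innerPath α f j w)‖ ≤ (1 + α * K) ^ j * ‖gradient f w‖ := by
      linarith [norm_le_norm_add_norm_sub' (gradient f (innerPath α f j w)) (gradient f w)]
    calc _ ≤ ‖gradient f (innerPath α f (j + 1) w) - gradient f (innerPath α f j w)‖ +
          ‖gradient f (innerPath α f j w) - gradient f w‖ :=
          norm_sub_le_norm_sub_add_norm_sub _ _ _
      _ ≤ α * K * ((1 + α * K) ^ j * ‖gradient f w‖) +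
          ((1 + α * K) ^ j - 1) * ‖gradient f w‖ := by
          gcongr
          exact (norm_gradient_innerPath_succ_sub_le hf hα j w).trans (by gcongr)
      _ = ((1 + α * K) ^ (j + 1) - 1) * ‖gradient f w‖ := by ring

lemma norm_hessProd_sub_one_le (hf : LipschitzWith K (gradient f)) (hα : 0 ≤ α) (N : ℕ)
    (w : EuclideanSpace ℝ (Fin d)) :
    ‖hessProd α N f w - 1‖ ≤ (1 + α * K) ^ N - 1 := by
  have hfactor : ∀ A ∈ (List.range N).map fun j =>
      ContinuousLinearMap.id ℝ (EuclideanSpace ℝ (Fin d)) -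
        α • fderiv ℝ (gradient f) (innerPath α f j w), ‖A - 1‖ ≤ α * K := by
    simp only [List.mem_map]
    rintro _ ⟨j, -, rfl⟩
    rw [ContinuousLinearMap.one_def, sub_sub_cancel_left, norm_neg, norm_smul,
      Real.norm_of_nonneg hα]
    exact mul_le_mul_of_nonneg_left (norm_fderiv_le_of_lipschitz ℝ hf) hα
  simpa [hessProd] using
    norm_list_prod_sub_one_le ContinuousLinearMap.norm_id_le (by positivity) _ hfactor

lemma norm_metaGrad_sub_gradient_le (hf : LipschitzWith K (gradient f)) (hα : 0 ≤ α) (N : ℕ)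
    (w : EuclideanSpace ℝ (Fin d)) :
    ‖metaGrad α N f f w - gradient f w‖ ≤ ((1 + α * K) ^ (2 * N) - 1) * ‖gradient f w‖ := by
  set P := hessProd α N f w
  have hP1 : ‖P - 1‖ ≤ (1 + α * K) ^ N - 1 := norm_hessProd_sub_one_le hf hα N w
  have hP : ‖P‖ ≤ (1 + α * K) ^ N := by
    simpa using norm_le_of_norm_sub_one_le ContinuousLinearMap.norm_id_le hP1
  have hdrift := norm_gradient_innerPath_sub_le hf hα w N
  have hsplit : metaGrad α N f f w - gradient f w =
      P (gradient f (innerPath α f N w) - gradient f w) + (P - 1) (gradient f w) := by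
    simp only [metaGrad, P, map_sub, sub_apply, one_apply_eq_self]
    abel
  calc _ ≤ ‖P‖ * ‖gradient f (innerPath α f N w) - gradient f w‖ +
        ‖P - 1‖ * ‖gradient f w‖ := by
        rw [hsplit]
        exact (norm_add_le _ _).trans (add_le_add (P.le_opNorm _) ((P - 1).le_opNorm _))
    _ ≤ (1 + α * K) ^ N * (((1 + α * K) ^ N - 1) * ‖gradient f w‖) +
        ((1 + α * K) ^ N - 1) * ‖gradient f w‖ := by gcongr
    _ = ((1 + α * K) ^ (2 * N) - 1) * ‖gradient f w‖ := by rw [two_mul, pow_add]; ring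

end InnerPath

section Averaging

variable {I E : Type*} [MeasurableSpace I] {μ : Measure I} [IsProbabilityMeasure μ]
  [NormedAddCommGroup E] [NormedSpace ℝ E]

lemma integral_le_of_integral_sq_le {h : I → ℝ} (hh : MemLp h 2 μ) {σ : ℝ} (hσ : 0 ≤ σ)
    (hsq : ∫ i, h i ^ 2 ∂μ ≤ σ ^ 2) : ∫ i, h i ∂μ ≤ σ := by
  have jensen : (∫ i, h i ∂μ) ^ 2 ≤ ∫ i, h i ^ 2 ∂μ :=
    sub_nonneg.mp (variance_eq_sub hh ▸ variance_nonneg h μ)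
  exact (abs_le_of_sq_le_sq' (jensen.trans hsq) hσ).2

lemma integral_norm_sub_integral_le {g : I → E} (hg : MemLp g 2 μ) {σ : ℝ} (hσ : 0 ≤ σ)
    (hvar : ∫ i, ‖g i - ∫ i', g i' ∂μ‖ ^ 2 ∂μ ≤ σ ^ 2) :
    ∫ i, ‖g i - ∫ i', g i' ∂μ‖ ∂μ ≤ σ :=
  integral_le_of_integral_sq_le (hg.sub (memLp_const _)).norm hσ hvar

lemma norm_integral_le_of_norm_sub_le_mul_norm {g G : I → E} (hg : Integrable g μ)
    (hG : Integrable G μ) {C σ : ℝ} (hC0 : 0 ≤ C) (hC1 : C < 1)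
    (hclose : ∀ i, ‖G i - g i‖ ≤ C * ‖g i‖) (hspread : ∫ i, ‖g i - ∫ i', g i' ∂μ‖ ∂μ ≤ σ) :
    ‖∫ i, g i ∂μ‖ ≤ 1 / (1 - C) * ‖∫ i, G i ∂μ‖ + C / (1 - C) * σ := by
  set gbar := ∫ i, g i ∂μ
  have hmean : ∫ i, ‖g i‖ ∂μ ≤ σ + ‖gbar‖ := by
    have hdev : Integrable (fun i => ‖g i - gbar‖) μ := (hg.sub (integrable_const gbar)).norm
    calc ∫ i, ‖g i‖ ∂μ ≤ ∫ i, (‖g i - gbar‖ + ‖gbar‖) ∂μ :=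
          integral_mono hg.norm (hdev.add (integrable_const _)) fun i =>
            norm_le_norm_sub_add (g i) gbar
      _ = ∫ i, ‖g i - gbar‖ ∂μ + ‖gbar‖ := by
          rw [integral_add hdev (integrable_const _), integral_const]; simp
      _ ≤ σ + ‖gbar‖ := by linarith
  have hgap : ‖gbar - ∫ i, G i ∂μ‖ ≤ C * ∫ i, ‖g i‖ ∂μ := by
    rw [← integral_sub hg hG, ← integral_const_mul]
    exact (norm_integral_le_integral_norm _).trans <|
      integral_mono (hg.sub hG).norm (hg.norm.const_mul C) fun i =>
        (norm_sub_rev _ _).trans_le (hclose i)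
  have habsorb : ‖gbar‖ ≤ ‖∫ i, G i ∂μ‖ + C * (σ + ‖gbar‖) := by
    linarith [norm_le_norm_add_norm_sub' gbar (∫ i, G i ∂μ), mul_le_mul_of_nonneg_left hmean hC0]
  rw [div_mul_eq_mul_div, div_mul_eq_mul_div, ← add_div, le_div_iff₀ (by linarith)]
  linarith

end Averaging

lemma pow_lt_of_lt_rpow_inv_natCast {x y : ℝ} (hx : 0 ≤ x) (hy : 1 < y) {n : ℕ}
    (h : x < y ^ (n : ℝ)⁻¹) : x ^ n < y := by
  rcases Nat.eq_zero_or_pos n with rfl | hn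
  · simpa using hy
  · exact_mod_cast (Real.lt_rpow_inv_iff_of_pos hx (by linarith) (by positivity)).1 h

theorem stmt10_general {d : ℕ} (α L σ : ℝ) (hα : 0 < α) (hL : 0 < L) (hσ : 0 < σ)
    (N : ℕ)
    (hαsmall : α < ((2 : ℝ) ^ ((1 : ℝ) / (2 * (N : ℝ))) - 1) / L)
    {I : Type*} [MeasurableSpace I] (μ : Measure I) [IsProbabilityMeasure μ]
    (l : I → EuclideanSpace ℝ (Fin d) → ℝ)
    (hgrad : ∀ i, ∀ w u : EuclideanSpace ℝ (Fin d),
      ‖gradient (l i) w - gradient (l i) u‖ ≤ L * ‖w - u‖)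
    (hgint : ∀ w : EuclideanSpace ℝ (Fin d), Integrable (fun i => gradient (l i) w) μ)
    (hg2int : ∀ w : EuclideanSpace ℝ (Fin d), Integrable (fun i => ‖gradient (l i) w‖ ^ 2) μ)
    (hGint : ∀ w : EuclideanSpace ℝ (Fin d),
      Integrable (fun i => metaGrad α N (l i) (l i) w) μ)
    (hvar : ∀ w : EuclideanSpace ℝ (Fin d),
      (∫ i, ‖gradient (l i) w - ∫ i', gradient (l i') w ∂μ‖ ^ 2 ∂μ) ≤ σ ^ 2) :
    ∀ w : EuclideanSpace ℝ (Fin d),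
      ‖∫ i, gradient (l i) w ∂μ‖ ≤
        (1 / (1 - ((1 + α * L) ^ (2 * N) - 1))) *
            ‖∫ i, metaGrad α N (l i) (l i) w ∂μ‖ +
          (((1 + α * L) ^ (2 * N) - 1) / (1 - ((1 + α * L) ^ (2 * N) - 1))) * σ := by
  intro w
  have hlip : ∀ i, LipschitzWith ⟨L, hL.le⟩ (gradient (l i)) := fun i =>
    LipschitzWith.of_dist_le_mul fun x y => by
      rw [dist_eq_norm, dist_eq_norm]; exact hgrad i x y
  have hC0 : 0 ≤ (1 + α * L) ^ (2 * N) - 1 :=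
    sub_nonneg.2 (one_le_pow₀ (le_add_of_nonneg_right (by positivity)))
  have hC1 : (1 + α * L) ^ (2 * N) - 1 < 1 := by
    have hroot : 1 + α * L < 2 ^ ((2 * N : ℕ) : ℝ)⁻¹ := by
      rw [Nat.cast_mul, Nat.cast_ofNat, ← one_div]
      linarith [(lt_div_iff₀ hL).1 hαsmall]
    linarith [pow_lt_of_lt_rpow_inv_natCast (by positivity) one_lt_two hroot]
  have hg2 : MemLp (fun i => gradient (l i) w) 2 μ :=
    (memLp_two_iff_integrable_sq_norm (hgint w).aestronglyMeasurable).2 (hg2int w)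
  exact norm_integral_le_of_norm_sub_le_mul_norm (hgint w) (hGint w) hC0 hC1
    (fun i => norm_metaGrad_sub_gradient_le (hlip i) hα.le N w)
    (integral_norm_sub_integral_le hg2 hσ.le (hvar w))

theorem stmt10 {d : ℕ} (hd : 1 ≤ d) (α L σ : ℝ) (hα : 0 < α) (hL : 0 < L) (hσ : 0 < σ)
    (N : ℕ) (hN : 1 ≤ N)
    (hαsmall : α < ((2 : ℝ) ^ ((1 : ℝ) / (2 * (N : ℝ))) - 1) / L)
    {I : Type*} [MeasurableSpace I] (μ : Measure I) [IsProbabilityMeasure μ]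
    (l : I → EuclideanSpace ℝ (Fin d) → ℝ)
    (hl : ∀ i, ContDiff ℝ 2 (l i))
    (hgrad : ∀ i, ∀ w u : EuclideanSpace ℝ (Fin d),
      ‖gradient (l i) w - gradient (l i) u‖ ≤ L * ‖w - u‖)
    (hgint : ∀ w : EuclideanSpace ℝ (Fin d), Integrable (fun i => gradient (l i) w) μ)
    (hg2int : ∀ w : EuclideanSpace ℝ (Fin d), Integrable (fun i => ‖gradient (l i) w‖ ^ 2) μ)
    (hGint : ∀ w : EuclideanSpace ℝ (Fin d),
      Integrable (fun i => metaGrad α N (l i) (l i) w) μ)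
    (hvar : ∀ w : EuclideanSpace ℝ (Fin d),
      (∫ i, ‖gradient (l i) w - ∫ i', gradient (l i') w ∂μ‖ ^ 2 ∂μ) ≤ σ ^ 2) :
    ∀ w : EuclideanSpace ℝ (Fin d),
      ‖∫ i, gradient (l i) w ∂μ‖ ≤
        (1 / (1 - ((1 + α * L) ^ (2 * N) - 1))) *
            ‖∫ i, metaGrad α N (l i) (l i) w ∂μ‖ +
          (((1 + α * L) ^ (2 * N) - 1) / (1 - ((1 + α * L) ^ (2 * N) - 1))) * σ :=
  stmt10_general α L σ hα hL hσ N hαsmall μ l hgrad hgint hg2int hGint hvar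
end

section
/- Assume ‖∇l_S(v) − ∇l_T(v)‖ ≤ b for every v ∈ ℝ^d. Then for every w ∈ ℝ^d, the gradient of l_T at the endpoint of the inner path on l_S satisfies ‖∇l_T(w̃_N(w))‖ ≤ (1 + αL)^N ‖∇l_T(w)‖ + ((1 + αL)^N − 1) b. -/
open MeasureTheory

theorem stmt11 {d : ℕ} (hd : 1 ≤ d) (α L b : ℝ) (hα : 0 < α) (hL : 0 < L) (hb : 0 ≤ b)
    (N : ℕ) (hN : 1 ≤ N)
    (lS lT : EuclideanSpace ℝ (Fin d) → ℝ) (hlS : ContDiff ℝ 2 lS) (hlT : ContDiff ℝ 2 lT)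
    (hgradS : ∀ w u : EuclideanSpace ℝ (Fin d), ‖gradient lS w - gradient lS u‖ ≤ L * ‖w - u‖)
    (hgradT : ∀ w u : EuclideanSpace ℝ (Fin d), ‖gradient lT w - gradient lT u‖ ≤ L * ‖w - u‖)
    (hdiffb : ∀ v : EuclideanSpace ℝ (Fin d), ‖gradient lS v - gradient lT v‖ ≤ b) :
    ∀ w : EuclideanSpace ℝ (Fin d),
      ‖gradient lT (innerPath α lS N w)‖ ≤
        (1 + α * L) ^ N * ‖gradient lT w‖ + ((1 + α * L) ^ N - 1) * b := by
  intro w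
  clear hN
  induction N with
  | zero => simp [innerPath]
  | succ n ih =>
    set x := innerPath α lS n w with hx
    have step : innerPath α lS (n + 1) w = x - α • gradient lS x := rfl
    have h2 : ‖gradient lT (x - α • gradient lS x) - gradient lT x‖ ≤
        L * ‖x - α • gradient lS x - x‖ := hgradT _ _
    have h3 : ‖x - α • gradient lS x - x‖ = α * ‖gradient lS x‖ := by
      rw [sub_sub_cancel_left, norm_neg, norm_smul, Real.norm_of_nonneg hα.le]
    have h4 : ‖gradient lS x‖ ≤ ‖gradient lT x‖ + b := by
      have := hdiffb x
      have htri := norm_sub_norm_le (gradient lS x) (gradient lT x)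
      linarith
    have h5 : ‖gradient lT (x - α • gradient lS x)‖ ≤
        ‖gradient lT x‖ + L * (α * ‖gradient lS x‖) := by
      have htri := norm_le_norm_add_norm_sub' (gradient lT (x - α • gradient lS x))
        (gradient lT x)
      rw [h3] at h2
      linarith
    rw [step]
    have hP1 : (1 : ℝ) ≤ 1 + α * L := by nlinarith
    have hPn : (1 : ℝ) ≤ (1 + α * L) ^ n := one_le_pow₀ hP1
    have hpow : (1 + α * L) ^ (n + 1) = (1 + α * L) ^ n * (1 + α * L) := pow_succ _ _
    nlinarith [norm_nonneg (gradient lT x), norm_nonneg (gradient lT w),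
      mul_le_mul_of_nonneg_left ih (by linarith : (0:ℝ) ≤ 1 + α * L)]
end

section
/- Assume ‖∇l_S(v) − ∇l_T(v)‖ ≤ b for every v ∈ ℝ^d. Then for every w ∈ ℝ^d the finite-sum meta gradient satisfies ‖G(w)‖ ≤ (1 + αL)^{2N} ‖∇l_T(w)‖ + (1 + αL)^N ((1 + αL)^N − 1) b. -/
open MeasureTheory

theorem stmt15 {d : ℕ} (hd : 1 ≤ d) (α L b : ℝ) (hα : 0 < α) (hL : 0 < L) (hb : 0 ≤ b)
    (N : ℕ) (hN : 1 ≤ N)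
    (lS lT : EuclideanSpace ℝ (Fin d) → ℝ) (hlS : ContDiff ℝ 2 lS) (hlT : ContDiff ℝ 2 lT)
    (hgradS : ∀ w u : EuclideanSpace ℝ (Fin d), ‖gradient lS w - gradient lS u‖ ≤ L * ‖w - u‖)
    (hgradT : ∀ w u : EuclideanSpace ℝ (Fin d), ‖gradient lT w - gradient lT u‖ ≤ L * ‖w - u‖)
    (hdiffb : ∀ v : EuclideanSpace ℝ (Fin d), ‖gradient lS v - gradient lT v‖ ≤ b) :
    ∀ w : EuclideanSpace ℝ (Fin d),
      ‖metaGrad α N lS lT w‖ ≤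
        (1 + α * L) ^ (2 * N) * ‖gradient lT w‖ +
          (1 + α * L) ^ N * ((1 + α * L) ^ N - 1) * b := by
  intro w
  have hαL : (0:ℝ) ≤ α * L := le_of_lt (mul_pos hα hL)
  have hone : (1:ℝ) ≤ 1 + α * L := by linarith
  -- Hessian norm bound
  have hhess : ∀ x : EuclideanSpace ℝ (Fin d), ‖fderiv ℝ (gradient lS) x‖ ≤ L := by
    intro x
    have hlip : LipschitzWith L.toNNReal (gradient lS) := by
      apply LipschitzWith.of_dist_le_mul
      intro a c
      simpa [dist_eq_norm, Real.coe_toNNReal L hL.le] using hgradS a c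
    have := norm_fderiv_le_of_lipschitz ℝ hlip (x₀ := x)
    rwa [Real.coe_toNNReal L hL.le] at this
  -- product norm bound
  have hprod : ∀ n : ℕ, ‖hessProd α n lS w‖ ≤ (1 + α * L) ^ n := by
    intro n
    induction n with
    | zero =>
      rw [pow_zero, show hessProd α 0 lS w =
        ContinuousLinearMap.id ℝ (EuclideanSpace ℝ (Fin d)) from rfl]
      exact ContinuousLinearMap.norm_id_le
    | succ n ih =>
      have : hessProd α (n+1) lS w = hessProd α n lS w *
          (ContinuousLinearMap.id ℝ (EuclideanSpace ℝ (Fin d)) -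
            α • fderiv ℝ (gradient lS) (innerPath α lS n w)) := by
        simp [hessProd, List.range_succ]
      rw [this, pow_succ]
      refine le_trans (norm_mul_le _ _) (mul_le_mul ih ?_ (norm_nonneg _) (by positivity))
      calc ‖ContinuousLinearMap.id ℝ (EuclideanSpace ℝ (Fin d)) -
            α • fderiv ℝ (gradient lS) (innerPath α lS n w)‖
          ≤ ‖ContinuousLinearMap.id ℝ (EuclideanSpace ℝ (Fin d))‖ +
            ‖α • fderiv ℝ (gradient lS) (innerPath α lS n w)‖ := norm_sub_le _ _
        _ ≤ 1 + α * L := by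
            have h1 : ‖ContinuousLinearMap.id ℝ (EuclideanSpace ℝ (Fin d))‖ ≤ 1 :=
              ContinuousLinearMap.norm_id_le
            have h2 : ‖α • fderiv ℝ (gradient lS) (innerPath α lS n w)‖ ≤ α * L := by
              rw [norm_smul, Real.norm_eq_abs, abs_of_pos hα]
              exact mul_le_mul_of_nonneg_left (hhess _) hα.le
            linarith
  -- gradient along path bound
  have hpath : ∀ n : ℕ, ‖gradient lT (innerPath α lS n w)‖ ≤
      (1 + α * L) ^ n * ‖gradient lT w‖ + ((1 + α * L) ^ n - 1) * b := by
    intro n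
    induction n with
    | zero => simp [innerPath]
    | succ n ih =>
      set x := innerPath α lS n w with hx
      have hstep : innerPath α lS (n+1) w = x - α • gradient lS x := rfl
      have h1 : ‖gradient lT (x - α • gradient lS x) - gradient lT x‖ ≤
          α * L * ‖gradient lS x‖ := by
        have := hgradT (x - α • gradient lS x) x
        have hn : ‖x - α • gradient lS x - x‖ = α * ‖gradient lS x‖ := by
          simp [norm_smul, abs_of_pos hα]
        rw [hn] at this
        linarith [this]
      have h2 : ‖gradient lS x‖ ≤ ‖gradient lT x‖ + b := by
        have := hdiffb x
        have h3 := norm_sub_norm_le (gradient lS x) (gradient lT x)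
        linarith
      have h4 : ‖gradient lT (innerPath α lS (n+1) w)‖ ≤
          ‖gradient lT x‖ + α * L * ‖gradient lS x‖ := by
        rw [hstep]
        have := norm_sub_le (gradient lT (x - α • gradient lS x) - gradient lT x)
          (- gradient lT x)
        have h5 := norm_le_insert' (gradient lT (x - α • gradient lS x)) (gradient lT x)
        linarith [h1]
      have hp1 : (1:ℝ) ≤ (1 + α * L) ^ n := one_le_pow₀ hone
      have key : ‖gradient lT (innerPath α lS (n+1) w)‖ ≤
          (1 + α * L) * ‖gradient lT x‖ + α * L * b := by nlinarith
      calc ‖gradient lT (innerPath α lS (n+1) w)‖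
          ≤ (1 + α * L) * ‖gradient lT x‖ + α * L * b := key
        _ ≤ (1 + α * L) * ((1 + α * L) ^ n * ‖gradient lT w‖ + ((1 + α * L) ^ n - 1) * b)
            + α * L * b := by nlinarith
        _ = (1 + α * L) ^ (n+1) * ‖gradient lT w‖ + ((1 + α * L) ^ (n+1) - 1) * b := by
            ring
  -- combine
  have hmain : ‖metaGrad α N lS lT w‖ ≤
      (1 + α * L) ^ N * ((1 + α * L) ^ N * ‖gradient lT w‖ + ((1 + α * L) ^ N - 1) * b) := by
    calc ‖metaGrad α N lS lT w‖
        ≤ ‖hessProd α N lS w‖ * ‖gradient lT (innerPath α lS N w)‖ :=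
          ContinuousLinearMap.le_opNorm _ _
      _ ≤ (1 + α * L) ^ N * ((1 + α * L) ^ N * ‖gradient lT w‖ + ((1 + α * L) ^ N - 1) * b) := by
          refine mul_le_mul (hprod N) (hpath N) (norm_nonneg _) (by positivity)
  calc ‖metaGrad α N lS lT w‖
      ≤ (1 + α * L) ^ N * ((1 + α * L) ^ N * ‖gradient lT w‖ + ((1 + α * L) ^ N - 1) * b) :=
        hmain
    _ = (1 + α * L) ^ (2 * N) * ‖gradient lT w‖ +
        (1 + α * L) ^ N * ((1 + α * L) ^ N - 1) * b := by
        rw [two_mul, pow_add]; ring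
end
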